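/- arXiv:1105.2834 — 2 statements merged into one kernel-verified Lean document; each statement's English description precedes it below -/
import Mathlib

section
/- Let n ≥ 2 and let M be a uniformly random n × n matrix with entries in {−1,+1}. Then P_n ≥ P(D_{11}) ≥ 4·C(n,2)·(1/2)^n − (12·C(n,2)² − 4·C(n,2))·(1/4)^n, where 11 denotes the integer partition with two parts both equal to 1. In particular the probability P_n that M is singular satisfies P_n ≥ 4·C(n,2)·(1/2)^n − (12·C(n,2)² − 4·C(n,2))·(1/4)^n. -/
open scoped BigOperators Classical

namespace P2834

/-- The ±1 value associated to a Boolean. -/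
def signVal (b : Bool) : ℤ := if b then 1 else -1

/-- The Bernoulli ±1 matrix built from a Boolean matrix. -/
def bmat {n : ℕ} (B : Fin n → Fin n → Bool) : Matrix (Fin n) (Fin n) ℤ :=
  fun i j => signVal (B i j)

/-- Probability of an event under the uniform distribution on `n × n` ±1 matrices. -/
noncomputable def Pr (n : ℕ) (E : Matrix (Fin n) (Fin n) ℤ → Prop) : ℝ :=
  (Finset.filter (fun B : Fin n → Fin n → Bool => E (bmat B)) Finset.univ).card / 2 ^ (n * n)

/-- Expectation of a real-valued function of a uniformly random `n × n` ±1 matrix. -/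
noncomputable def Ex (n : ℕ) (f : Matrix (Fin n) (Fin n) ℤ → ℝ) : ℝ :=
  (∑ B : Fin n → Fin n → Bool, f (bmat B)) / 2 ^ (n * n)

/-- `lam : Fin k → ℤ` is an integer partition with `k` parts:
nonincreasing, all parts at least 1. -/
def IsPartition {k : ℕ} (lam : Fin k → ℤ) : Prop :=
  (∀ i j : Fin k, i ≤ j → lam j ≤ lam i) ∧ ∀ i, 1 ≤ lam i

/-- The Bernoulli orthogonal complement of `v`: sign vectors (encoded as Boolean
vectors, `true ↦ +1`, `false ↦ -1`) orthogonal to `v`. -/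
def perpB {k : ℕ} (v : Fin k → ℤ) : Finset (Fin k → Bool) :=
  Finset.filter (fun x => ∑ i, v i * signVal (x i) = 0) Finset.univ

/-- `r_λ := |λ^{⊥B}| / 2^k`. -/
def rVal {k : ℕ} (lam : Fin k → ℤ) : ℚ := (perpB lam).card / 2 ^ k

/-- `V_λ`: all vectors obtained by permuting the parts of `λ` and attaching ± signs,
with the first coordinate positive. -/
def Vlam {k : ℕ} (lam : Fin k → ℤ) : Set (Fin k → ℤ) :=
  {v | (∃ (σ : Equiv.Perm (Fin k)) (ε : Fin k → ℤ),
          (∀ i, ε i = 1 ∨ ε i = -1) ∧ ∀ i, v i = ε i * lam (σ i)) ∧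
        ∀ h : 0 < k, 0 < v ⟨0, h⟩}

/-- `V_λ^{(n)}`: vectors of length `n` of template `λ`, obtained from elements of
`V_λ` by inserting `n - k` zero coordinates (via an order-preserving coordinate
injection). -/
def VlamN {k : ℕ} (lam : Fin k → ℤ) (n : ℕ) : Set (Fin n → ℤ) :=
  {w | ∃ (c : Fin k ↪o Fin n) (u : Fin k → ℤ), u ∈ Vlam lam ∧
        (∀ i, w (c i) = u i) ∧ ∀ j, (∀ i, c i ≠ j) → w j = 0}

/-- `μ` reduces to `λ` (`μ ⇒ λ`): there are a `k`-element subset `I` of the `m`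
coordinates (given by an order embedding) and `v ∈ V_λ` with
`Proj_I μ^{⊥B} ⊆ v^{⊥B}`.  (When `k = m` the only order embedding is the identity,
recovering the case `μ^{⊥B} ⊆ v^{⊥B}`.) -/
def Reduces {m k : ℕ} (mu : Fin m → ℤ) (lam : Fin k → ℤ) : Prop :=
  ∃ (I : Fin k ↪o Fin m) (v : Fin k → ℤ), v ∈ Vlam lam ∧
    ∀ x ∈ perpB mu, (fun i => x (I i)) ∈ perpB v

/-- Equivalence of templates: reduction in both directions. -/
def Equivp {m k : ℕ} (mu : Fin m → ℤ) (lam : Fin k → ℤ) : Prop :=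
  Reduces mu lam ∧ Reduces lam mu

/-- Strict reduction: `μ ⇒ λ` but not `λ ⇒ μ`. -/
def StrictReduces {m k : ℕ} (mu : Fin m → ℤ) (lam : Fin k → ℤ) : Prop :=
  Reduces mu lam ∧ ¬ Reduces lam mu

/-- Lexicographic comparison of integer vectors. -/
def lexLE {k : ℕ} (a b : Fin k → ℤ) : Prop :=
  a = b ∨ ∃ i, (∀ j, j < i → a j = b j) ∧ a i < b i

/-- A partition is novel iff it does not strictly reduce to any partition, and it is
lexicographically first among all partitions equivalent to it. -/
def Novel {k : ℕ} (lam : Fin k → ℤ) : Prop :=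
  IsPartition lam ∧
  (∀ (m : ℕ) (mu : Fin m → ℤ), IsPartition mu → ¬ StrictReduces lam mu) ∧
  (∀ mu : Fin k → ℤ, IsPartition mu → Equivp lam mu → lexLE lam mu)

/-- The event that `M` has a right null vector of template `λ`. -/
def Rev {k : ℕ} (lam : Fin k → ℤ) (n : ℕ) (M : Matrix (Fin n) (Fin n) ℤ) : Prop :=
  ∃ v ∈ VlamN lam n, M.mulVec v = 0

/-- The event that `M` has a left null vector of template `λ`. -/
def Lev {k : ℕ} (lam : Fin k → ℤ) (n : ℕ) (M : Matrix (Fin n) (Fin n) ℤ) : Prop :=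
  ∃ v ∈ VlamN lam n, Matrix.vecMul v M = 0

/-- `D_λ := R_λ ∪ L_λ`. -/
def Dev {k : ℕ} (lam : Fin k → ℤ) (n : ℕ) (M : Matrix (Fin n) (Fin n) ℤ) : Prop :=
  Rev lam n M ∨ Lev lam n M

/-- The partition `1^k`. -/
def onesP (k : ℕ) : Fin k → ℤ := fun _ => 1

/-- The partition `2·1^(k-1)`. -/
def twoOnesP (k : ℕ) : Fin k → ℤ := fun i => if i.val = 0 then 2 else 1

/-!
If two columns of `M` are equal or opposite, say column `i` is `±` column `j` with `i < j`, then
`e_i ∓ e_j` is a right null vector of template `11`; likewise for rows and left null vectors.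
These `4·C(n,2)` events `A_t` each have probability `2^{-n}`. Two distinct column events
are disjoint when they concern the same pair and otherwise force two columns to be determined by
the rest, so they meet with probability at most `4^{-n}`; a column event and a row event meet
with probability at most `2·4^{-n}`. Summing over ordered pairs of distinct events gives
`Σ P(A_t ∩ A_t') ≤ 2 (12 C(n,2)² - 4 C(n,2)) 4^{-n}`, and the second Bonferroni inequality
`P(⋃ A_t) ≥ Σ P(A_t) - ½ Σ_{t ≠ t'} P(A_t ∩ A_t')` finishes the proof.
-/

open Finset

section Bonferroni

variable {Ω ι : Type*} [Fintype Ω] [DecidableEq Ω]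

theorem sum_card_eq_sum_card_filter_mem (T : Finset ι) (A : ι → Finset Ω) :
    ∑ t ∈ T, #(A t) = ∑ ω, #{t ∈ T | ω ∈ A t} := by
  simp only [card_eq_sum_ones, sum_filter]
  rw [sum_comm]
  simp

theorem card_biUnion_eq_sum_ite (T : Finset ι) (A : ι → Finset Ω) :
    #(T.biUnion A) = ∑ ω, if ω ∈ T.biUnion A then 1 else 0 := by
  rw [← sum_filter, ← card_eq_sum_ones, filter_mem_eq_inter, univ_inter]

theorem two_mul_le_two_add_mul_self_sub (k : ℕ) : 2 * k ≤ 2 + (k * k - k) := by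
  rcases Nat.lt_or_ge k 2 with hk | hk
  · interval_cases k <;> simp
  · have := Nat.le_mul_self k
    zify [this]
    nlinarith

/-- The second Bonferroni inequality, with the pairwise intersections counted as ordered pairs. -/
theorem two_mul_sum_card_le (T : Finset ι) (A : ι → Finset Ω) :
    2 * ∑ t ∈ T, #(A t) ≤ 2 * #(T.biUnion A) + ∑ p ∈ T.offDiag, #(A p.1 ∩ A p.2) := by
  have hpairs : ∀ ω, #{p ∈ T.offDiag | ω ∈ A p.1 ∩ A p.2} = #({t ∈ T | ω ∈ A t}.offDiag) := by
    intro ω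
    congr 1
    ext p
    simp only [mem_filter, mem_offDiag, mem_inter]
    tauto
  rw [sum_card_eq_sum_card_filter_mem, sum_card_eq_sum_card_filter_mem T.offDiag,
    card_biUnion_eq_sum_ite, mul_sum, mul_sum, ← sum_add_distrib]
  refine sum_le_sum fun ω _ => ?_
  rw [hpairs, offDiag_card]
  split_ifs with hω
  · exact two_mul_le_two_add_mul_self_sub _
  · have : {t ∈ T | ω ∈ A t} = ∅ := by
      simp only [mem_biUnion, not_exists, not_and] at hω
      exact filter_false_of_mem hω
    simp [this]

end Bonferroni

theorem card_le_pow_of_determined_on {α γ β : Type*} [Fintype α] [Fintype γ] [Fintype β]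
    (S : Finset (α → γ → β)) (D : Finset (α × γ))
    (hD : ∀ B ∈ S, ∀ B' ∈ S, (∀ p ∈ D, B p.1 p.2 = B' p.1 p.2) → B = B') :
    #S ≤ Fintype.card β ^ #D := by
  have h := card_le_card_of_injOn (t := (univ : Finset (D → β)))
    (fun B (p : D) => B p.1.1 p.1.2) (fun _ _ => mem_univ _)
    (fun B hB B' hB' h => hD B hB B' hB' fun p hp => congrFun h ⟨p, hp⟩)
  simpa using h

theorem sum_sum_ite_ite_eq {α : Type*} [DecidableEq α] (P : Finset α) (X Y : ℕ) :
    ∑ t ∈ (univ : Finset Bool) ×ˢ P ×ˢ (univ : Finset Bool),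
      ∑ t' ∈ (univ : Finset Bool) ×ˢ P ×ˢ (univ : Finset Bool),
        (if t.1 = t'.1 then (if t.2.1 = t'.2.1 then 0 else Y) else X) =
      8 * ((#P * #P - #P) * Y + #P * #P * X) := by
  have hP : ∀ q ∈ P, ∑ q' ∈ P, (if q = q' then 0 else Y) = (#P - 1) * Y := by
    intro q hq
    rw [sum_ite, sum_const_zero, zero_add, sum_const, filter_ne, card_erase_of_mem hq, smul_eq_mul]
  simp only [sum_product, Fintype.sum_bool, Bool.false_eq_true, Bool.true_eq_false, if_true,
    if_false, sum_add_distrib, sum_const, smul_eq_mul]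
  rw [sum_congr rfl hP, sum_const, smul_eq_mul, ← Nat.mul_sub_one]
  ring

section Parallel

variable {n : ℕ}

/-- Column `i` of the sign matrix `B` is column `j`, negated when `s` holds. -/
def ColsParallel (i j : Fin n) (s : Bool) (B : Fin n → Fin n → Bool) : Prop :=
  ∀ x, B x i = xor s (B x j)

def RowsParallel (a b : Fin n) (s : Bool) (B : Fin n → Fin n → Bool) : Prop :=
  ∀ y, B a y = xor s (B b y)

theorem colsParallel_piComm {i j : Fin n} {s : Bool} {B : Fin n → Fin n → Bool} :
    ColsParallel i j s (Equiv.piComm _ B) ↔ RowsParallel i j s B := Iff.rfl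

theorem card_filter_piComm (p : (Fin n → Fin n → Bool) → Prop) [DecidablePred p] :
    #{B | p (Equiv.piComm _ B)} = #{B | p B} :=
  card_equiv (Equiv.piComm _) (by simp)

theorem ColsParallel.trans_left {i j j' : Fin n} {s s' : Bool} {B : Fin n → Fin n → Bool}
    (h : ColsParallel i j s B) (h' : ColsParallel i j' s' B) :
    ColsParallel j j' (xor s s') B := fun x => by
  rw [Bool.xor_assoc, ← (h x).symm.trans (h' x), ← Bool.xor_assoc, Bool.xor_self, Bool.false_xor]

def rowsParallelEquiv {a b : Fin n} (hab : a ≠ b) (s : Bool) :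
    {B : Fin n → Fin n → Bool // RowsParallel a b s B} ≃ ({x : Fin n // x ≠ a} → Fin n → Bool) where
  toFun B x := B.1 x
  invFun G := ⟨fun x y => if h : x = a then xor s (G ⟨b, hab.symm⟩ y) else G ⟨x, h⟩ y,
    fun y => by simp [hab.symm]⟩
  left_inv B := by
    ext x y
    by_cases h : x = a
    · subst h; simp [B.2 y]
    · simp [h]
  right_inv G := by
    ext ⟨x, hx⟩ y
    simp [hx]

theorem card_rowsParallel {a b : Fin n} (hab : a ≠ b) (s : Bool) :
    #{B | RowsParallel a b s B} = 2 ^ (n * (n - 1)) := by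
  rw [← Fintype.card_subtype, Fintype.card_congr (rowsParallelEquiv hab s)]
  simp [Fintype.card_subtype_compl, pow_mul]

theorem card_colsParallel {i j : Fin n} (hij : i ≠ j) (s : Bool) :
    #{B | ColsParallel i j s B} = 2 ^ (n * (n - 1)) := by
  rw [← card_filter_piComm]
  exact card_rowsParallel hij s

theorem eq_of_eqOn_of_colsParallel_later {K : Finset (Fin n)} {B B' : Fin n → Fin n → Bool}
    (hK : ∀ k ∈ K, ∃ d, k < d ∧ ∃ s, ColsParallel k d s B ∧ ColsParallel k d s B')
    (h : ∀ x y, y ∉ K → B x y = B' x y) : B = B' := by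
  suffices ∀ y x, B x y = B' x y by ext x y; exact this y x
  intro y
  induction y using WellFoundedGT.induction with
  | ind y ih =>
    intro x
    by_cases hy : y ∈ K
    · obtain ⟨d, hyd, s, hB, hB'⟩ := hK y hy
      rw [hB x, hB' x, ih d hyd x]
    · exact h x y hy

theorem card_le_of_colsParallel_later {k₁ k₂ d₁ d₂ : Fin n} (hk : k₁ ≠ k₂) (h₁ : k₁ < d₁)
    (h₂ : k₂ < d₂) (t₁ t₂ : Bool) (S : Finset (Fin n → Fin n → Bool))
    (hS : ∀ B ∈ S, ColsParallel k₁ d₁ t₁ B ∧ ColsParallel k₂ d₂ t₂ B) :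
    #S ≤ 2 ^ (n * (n - 2)) := by
  refine (card_le_pow_of_determined_on S (univ ×ˢ {k₁, k₂}ᶜ) fun B hB B' hB' hD => ?_).trans_eq
    (by simp [card_compl, hk]; omega)
  refine eq_of_eqOn_of_colsParallel_later (K := {k₁, k₂}) ?_
    fun x y hy => hD (x, y) (by simpa using hy)
  simp only [mem_insert, mem_singleton, forall_eq_or_imp, forall_eq]
  exact ⟨⟨d₁, h₁, t₁, (hS B hB).1, (hS B' hB').1⟩, ⟨d₂, h₂, t₂, (hS B hB).2, (hS B' hB').2⟩⟩

theorem card_colsParallel_inter_le {i j i' j' : Fin n} (hij : i < j) (hij' : i' < j')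
    {s s' : Bool} (hne : (i, j, s) ≠ (i', j', s')) :
    #{B | ColsParallel i j s B ∧ ColsParallel i' j' s' B} ≤
      if (i, j) = (i', j') then 0 else 2 ^ (n * (n - 2)) := by
  split_ifs with hq
  · obtain ⟨rfl, rfl⟩ := Prod.ext_iff.1 hq
    have hs : s ≠ s' := fun h => hne (by rw [h])
    refine (card_eq_zero.2 (filter_false_of_mem fun B _ ⟨h, h'⟩ => hs ?_)).le
    simpa using (h ⟨0, i.pos⟩).symm.trans (h' ⟨0, i.pos⟩)
  by_cases hii : i = i'
  · subst hii
    have hjj : j ≠ j' := fun h => hq (by rw [h])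
    rcases hjj.lt_or_gt with hjj | hjj
    · refine card_le_of_colsParallel_later hij.ne hij' hjj s' (xor s s') _ fun B hB => ?_
      simp only [mem_filter, mem_univ, true_and] at hB
      exact ⟨hB.2, hB.1.trans_left hB.2⟩
    · refine card_le_of_colsParallel_later hij'.ne hij hjj s (xor s' s) _ fun B hB => ?_
      simp only [mem_filter, mem_univ, true_and] at hB
      exact ⟨hB.1, hB.2.trans_left hB.1⟩
  · exact card_le_of_colsParallel_later hii hij hij' s s' _ fun B hB => by simpa using hB

theorem card_colsParallel_inter_rowsParallel_le {i j a b : Fin n} (hij : i ≠ j) (hab : a ≠ b)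
    (s t : Bool) :
    #{B | ColsParallel i j s B ∧ RowsParallel a b t B} ≤ 2 ^ ((n - 1) * (n - 1)) := by
  refine (card_le_pow_of_determined_on _ ({a}ᶜ ×ˢ {i}ᶜ) fun B hB B' hB' hD => ?_).trans_eq
    (by simp [card_compl])
  simp only [mem_filter, mem_univ, true_and] at hB hB'
  have hrows : ∀ x, x ≠ a → ∀ y, B x y = B' x y := by
    intro x hx y
    by_cases hy : y = i
    · subst hy
      rw [hB.1 x, hB'.1 x, hD (x, j) (by simp [hx, hij.symm])]
    · exact hD (x, y) (by simp [hx, hy])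
  ext x y
  by_cases hx : x = a
  · subst hx
    rw [hB.2 y, hB'.2 y, hrows b hab.symm y]
  · exact hrows x hx y

theorem signVal_eq_one_or_neg_one (b : Bool) : signVal b = 1 ∨ signVal b = -1 := by
  cases b <;> simp [signVal]

theorem single_add_single_mem_VlamN_onesP {i j : Fin n} (hij : i < j) {e : ℤ}
    (he : e = 1 ∨ e = -1) : Pi.single i 1 + Pi.single j e ∈ VlamN (onesP 2) n := by
  have hmono : StrictMono ![i, j] := Fin.strictMono_iff_lt_succ.2 fun k => by
    fin_cases k; simpa using hij
  refine ⟨OrderEmbedding.ofStrictMono _ hmono, ![1, e],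
    ⟨⟨Equiv.refl _, ![1, e], fun k => ?_, fun k => ?_⟩, fun _ => by simp⟩, fun k => ?_,
    fun y hy => ?_⟩
  · fin_cases k <;> simp [he]
  · simp [onesP]
  · fin_cases k <;> simp [hij.ne, hij.ne']
  · have h0 := hy 0
    have h1 := hy 1
    simp only [OrderEmbedding.coe_ofStrictMono, Matrix.cons_val_zero, Matrix.cons_val_one] at h0 h1
    simp [Ne.symm h0, Ne.symm h1]

theorem ColsParallel.rev {i j : Fin n} (hij : i < j) {s : Bool} {B : Fin n → Fin n → Bool}
    (h : ColsParallel i j s B) : Rev (onesP 2) n (bmat B) := by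
  refine ⟨_, single_add_single_mem_VlamN_onesP hij (signVal_eq_one_or_neg_one s), ?_⟩
  ext x
  have hx : signVal (B x i) + signVal s * signVal (B x j) = 0 := by
    rw [h x]
    cases s <;> cases B x j <;> rfl
  simpa [Matrix.mulVec_add, bmat] using hx

theorem RowsParallel.lev {a b : Fin n} (hab : a < b) {s : Bool} {B : Fin n → Fin n → Bool}
    (h : RowsParallel a b s B) : Lev (onesP 2) n (bmat B) := by
  obtain ⟨v, hv, hmul⟩ := ColsParallel.rev hab (colsParallel_piComm.2 h)
  exact ⟨v, hv, by rwa [← Matrix.mulVec_transpose]⟩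

theorem ne_zero_of_mem_VlamN_onesP {v : Fin n → ℤ} (hv : v ∈ VlamN (onesP 2) n) : v ≠ 0 := by
  rintro rfl
  obtain ⟨c, u, ⟨-, hpos⟩, hcu, -⟩ := hv
  simpa [← hcu] using hpos two_pos

theorem Dev.det_eq_zero {M : Matrix (Fin n) (Fin n) ℤ} (h : Dev (onesP 2) n M) : M.det = 0 := by
  rcases h with ⟨v, hv, hM⟩ | ⟨v, hv, hM⟩
  · exact Matrix.exists_mulVec_eq_zero_iff.mp ⟨v, ne_zero_of_mem_VlamN_onesP hv, hM⟩
  · exact Matrix.exists_vecMul_eq_zero_iff.mp ⟨v, ne_zero_of_mem_VlamN_onesP hv, hM⟩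

end Parallel

section Family

variable {n : ℕ}

def LinesParallel : Bool → Fin n → Fin n → Bool → (Fin n → Fin n → Bool) → Prop
  | false => ColsParallel
  | true => RowsParallel

/-- `(r, (i, j), s)` indexes the event that rows (if `r`) or columns `i < j` are equal
(`s = false`) or opposite. -/
def parallelIndex (n : ℕ) : Finset (Bool × (Fin n × Fin n) × Bool) :=
  univ ×ˢ ({q | q.1 < q.2} : Finset (Fin n × Fin n)) ×ˢ univ

noncomputable def parallelEvent (t : Bool × (Fin n × Fin n) × Bool) :
    Finset (Fin n → Fin n → Bool) :=
  {B | LinesParallel t.1 t.2.1.1 t.2.1.2 t.2.2 B}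

theorem mem_parallelIndex {t : Bool × (Fin n × Fin n) × Bool} :
    t ∈ parallelIndex n ↔ t.2.1.1 < t.2.1.2 := by
  simp [parallelIndex]

theorem card_parallelIndex : #(parallelIndex n) = 4 * n.choose 2 := by
  simp only [parallelIndex, card_product, card_univ, Fintype.card_bool,
    Fintype.card_product_filter_lt, Fintype.card_fin]
  ring

theorem card_parallelEvent {t : Bool × (Fin n × Fin n) × Bool} (ht : t ∈ parallelIndex n) :
    #(parallelEvent t) = 2 ^ (n * (n - 1)) := by
  obtain ⟨_ | _, ⟨i, j⟩, s⟩ := t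
  · exact card_colsParallel (mem_parallelIndex.1 ht).ne s
  · exact card_rowsParallel (mem_parallelIndex.1 ht).ne s

theorem parallelEvent_subset_dev {t : Bool × (Fin n × Fin n) × Bool} (ht : t ∈ parallelIndex n) :
    parallelEvent t ⊆ ({B | Dev (onesP 2) n (bmat B)} : Finset (Fin n → Fin n → Bool)) := by
  obtain ⟨_ | _, ⟨i, j⟩, s⟩ := t <;> intro B hB <;> simp only [parallelEvent, mem_filter,
    mem_univ, true_and] at hB ⊢
  · exact Or.inl (ColsParallel.rev (mem_parallelIndex.1 ht) hB)
  · exact Or.inr (RowsParallel.lev (mem_parallelIndex.1 ht) hB)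

theorem card_parallelEvent_inter_le {t t' : Bool × (Fin n × Fin n) × Bool}
    (ht : t ∈ parallelIndex n) (ht' : t' ∈ parallelIndex n) (hne : t ≠ t') :
    #(parallelEvent t ∩ parallelEvent t') ≤
      if t.1 = t'.1 then (if t.2.1 = t'.2.1 then 0 else 2 ^ (n * (n - 2)))
      else 2 ^ ((n - 1) * (n - 1)) := by
  obtain ⟨r, ⟨i, j⟩, s⟩ := t
  obtain ⟨r', ⟨i', j'⟩, s'⟩ := t'
  have hij : i < j := mem_parallelIndex.1 ht
  have hij' : i' < j' := mem_parallelIndex.1 ht'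
  simp only [parallelEvent, ← filter_and]
  cases r <;> cases r' <;> simp only [LinesParallel, if_true, if_false, Bool.false_eq_true,
    Bool.true_eq_false]
  · exact card_colsParallel_inter_le hij hij' (by simpa using hne)
  · exact card_colsParallel_inter_rowsParallel_le hij.ne hij'.ne s s'
  · simp only [and_comm (a := RowsParallel i j s _)]
    exact card_colsParallel_inter_rowsParallel_le hij'.ne hij.ne s' s
  · exact (card_filter_piComm fun B => ColsParallel i j s B ∧ ColsParallel i' j' s' B).trans_le
      (card_colsParallel_inter_le hij hij' (by simpa using hne))

theorem card_dev_onesP_two_ge (n : ℕ) :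
    8 * n.choose 2 * 2 ^ (n * (n - 1)) ≤
      2 * #{B | Dev (onesP 2) n (bmat B)} +
        8 * ((n.choose 2 * n.choose 2 - n.choose 2) * 2 ^ (n * (n - 2)) +
          n.choose 2 * n.choose 2 * 2 ^ ((n - 1) * (n - 1))) := by
  have hN : #({q | q.1 < q.2} : Finset (Fin n × Fin n)) = n.choose 2 := by
    simp [Fintype.card_product_filter_lt]
  have hsum : 8 * n.choose 2 * 2 ^ (n * (n - 1)) =
      2 * ∑ t ∈ parallelIndex n, #(parallelEvent t) := by
    rw [sum_congr rfl fun t ht => card_parallelEvent ht, sum_const, card_parallelIndex, smul_eq_mul]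
    ring
  rw [hsum, ← hN, ← sum_sum_ite_ite_eq, ← parallelIndex, ← sum_product']
  refine (two_mul_sum_card_le _ _).trans (add_le_add ?_ ?_)
  · gcongr
    exact biUnion_subset.2 fun t ht => parallelEvent_subset_dev ht
  · calc ∑ p ∈ (parallelIndex n).offDiag, #(parallelEvent p.1 ∩ parallelEvent p.2)
        ≤ ∑ p ∈ (parallelIndex n).offDiag, (if p.1.1 = p.2.1 then
            (if p.1.2.1 = p.2.2.1 then 0 else 2 ^ (n * (n - 2))) else 2 ^ ((n - 1) * (n - 1))) :=
          sum_le_sum fun p hp => card_parallelEvent_inter_le (mem_offDiag.1 hp).1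
            (mem_offDiag.1 hp).2.1 (mem_offDiag.1 hp).2.2
      _ ≤ _ := sum_le_sum_of_subset fun p hp =>
          mem_product.2 ⟨(mem_offDiag.1 hp).1, (mem_offDiag.1 hp).2.1⟩

end Family

theorem Pr_mono {n : ℕ} {E F : Matrix (Fin n) (Fin n) ℤ → Prop} (h : ∀ M, E M → F M) :
    Pr n E ≤ Pr n F := by
  unfold Pr
  gcongr
  exact h _

theorem two_pow_mul_sub_eq {n k : ℕ} (hk : k ≤ n) :
    (2 : ℝ) ^ (n * (n - k)) = 2 ^ (n * n) * ((1 / 2) ^ n) ^ k := by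
  rw [← Nat.sub_add_cancel hk, mul_add, pow_add, Nat.add_sub_cancel, mul_assoc, ← pow_mul,
    ← mul_pow]
  norm_num

/-- lower bound `P_n ≥ P(D_{11}) ≥ 4 C(n,2) (1/2)^n - (12 C(n,2)^2 - 4 C(n,2)) (1/4)^n`. -/
theorem stmt0 (n : ℕ) (hn : 2 ≤ n) :
    Pr n (fun M => M.det = 0) ≥ Pr n (Dev (onesP 2) n) ∧
    Pr n (Dev (onesP 2) n) ≥
      4 * (n.choose 2 : ℝ) * (1 / 2) ^ n -
        (12 * (n.choose 2 : ℝ) ^ 2 - 4 * (n.choose 2 : ℝ)) * (1 / 4) ^ n := by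
  refine ⟨Pr_mono fun _ => Dev.det_eq_zero, ?_⟩
  have hcount := card_dev_onesP_two_ge n
  set N := n.choose 2
  have hsq : (2 : ℝ) ^ ((n - 1) * (n - 1)) = 2 * 2 ^ (n * (n - 2)) := by
    obtain ⟨m, rfl⟩ : ∃ m, n = m + 2 := ⟨n - 2, by omega⟩
    rw [← pow_succ', show m + 2 - 1 = m + 1 by omega, Nat.add_sub_cancel]
    ring_nf
  have hquarter : (1 / 4 : ℝ) ^ n = ((1 / 2) ^ n) ^ 2 := by
    rw [← pow_mul, mul_comm, pow_mul]
    norm_num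
  replace hcount := (Nat.cast_le (α := ℝ)).2 hcount
  push_cast [Nat.cast_sub (Nat.le_mul_self N), hsq] at hcount
  rw [two_pow_mul_sub_eq (by omega : 1 ≤ n), two_pow_mul_sub_eq hn] at hcount
  rw [ge_iff_le, Pr, le_div_iff₀ (by positivity), hquarter]
  linarith

end P2834
end

section
/- Suppose λ is an integer partition with k ≥ 3 parts that are not all equal. Then |λ^{⊥B}| is at most the sum of the four largest binomial coefficients C(k−2, j) over j ∈ {0, 1, …, k−2}. -/
/-! Fix coordinates `a`, `b` with `λ_a ≠ λ_b`. A sign vector `x ⊥ λ` is determined by the set `Z`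
of its `+1` coordinates among the other `k - 2`: the rest of the sum fixes `λ_a x_a + λ_b x_b`,
and since the parts are positive and distinct, the four values `±λ_a ± λ_b` are distinct.
Moreover `∑_{i ∈ Z} 2 λ_i` takes at most four values, and for each value the sets `Z` attaining
it form an antichain. By the LYM inequality the layer densities of their union sum to at most
`4`, and an exchange argument shows that such a family is no larger than the four largest
layers of the Boolean lattice. -/

open scoped BigOperators Classical

namespace P2834

/-- The sum of the four largest binomial coefficients `C(m, j)`, `0 ≤ j ≤ m`:
the maximum of `∑_{j ∈ S} C(m,j)` over subsets `S` with at most 4 elements. -/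
def sumTop4 (m : ℕ) : ℕ :=
  ((Finset.range (m + 1)).powerset.filter (fun S => S.card ≤ 4)).sup
    (fun S => ∑ j ∈ S, Nat.choose m j)

open Finset

section Knapsack

lemma le_of_mem_sdiff_of_forall_sum_le {ι β : Type*} [AddCommMonoid β] [LinearOrder β]
    [IsOrderedCancelAddMonoid β] {I S : Finset ι} {c : ι → β} {r : ℕ}
    (hS : S ∈ I.powersetCard r) (hmax : ∀ S' ∈ I.powersetCard r, ∑ i ∈ S', c i ≤ ∑ i ∈ S, c i)
    {s u : ι} (hs : s ∈ I \ S) (hu : u ∈ S) : c s ≤ c u := by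
  obtain ⟨hSI, hSr⟩ := mem_powersetCard.1 hS
  obtain ⟨hsI, hsS⟩ := mem_sdiff.1 hs
  have hsS' : s ∉ S.erase u := fun h => hsS (mem_of_mem_erase h)
  have hswap : insert s (S.erase u) ∈ I.powersetCard r := by
    refine mem_powersetCard.2 ⟨insert_subset hsI ((erase_subset u S).trans hSI), ?_⟩
    rw [card_insert_of_notMem hsS', card_erase_of_mem hu, ← hSr]
    have := card_pos.2 ⟨u, hu⟩
    omega
  have := hmax _ hswap
  rw [sum_insert hsS', ← add_sum_erase S c hu] at this
  exact le_of_add_le_add_right this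

variable {ι 𝕜 : Type*} [Field 𝕜] [LinearOrder 𝕜] [IsStrictOrderedRing 𝕜]

lemma sum_le_sum_of_sum_div_le_card {I S : Finset ι} (hSI : S ⊆ I) {n c : ι → 𝕜} {Q : 𝕜}
    (hc : ∀ i ∈ I, 0 < c i) (hn₀ : ∀ i ∈ I, 0 ≤ n i) (hnc : ∀ i ∈ I, n i ≤ c i) (hQ : 0 ≤ Q)
    (hout : ∀ i ∈ I \ S, c i ≤ Q) (hin : ∀ i ∈ S, Q ≤ c i)
    (hsum : ∑ i ∈ I, n i / c i ≤ #S) :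
    ∑ i ∈ I, n i ≤ ∑ i ∈ S, c i := by
  have hout' : ∑ i ∈ I \ S, n i ≤ ∑ i ∈ I \ S, Q * (n i / c i) := by
    refine sum_le_sum fun i hi => ?_
    have hiI := (mem_sdiff.1 hi).1
    calc n i = c i * (n i / c i) := (mul_div_cancel₀ _ (hc i hiI).ne').symm
      _ ≤ Q * (n i / c i) :=
        mul_le_mul_of_nonneg_right (hout i hi) (div_nonneg (hn₀ i hiI) (hc i hiI).le)
  have hin' : ∑ i ∈ S, (n i - c i) ≤ ∑ i ∈ S, Q * (n i / c i - 1) := by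
    refine sum_le_sum fun i hi => ?_
    have hci := hc i (hSI hi)
    calc n i - c i = c i * (n i / c i - 1) := by field_simp
      _ ≤ Q * (n i / c i - 1) := by
        refine mul_le_mul_of_nonpos_right (hin i hi) ?_
        rw [sub_nonpos, div_le_one hci]
        exact hnc i (hSI hi)
  simp only [sum_sub_distrib, ← mul_sum, sum_const, nsmul_eq_mul, mul_one, mul_sub] at hout' hin'
  rw [← sum_sdiff hSI] at hsum ⊢
  linarith [mul_le_mul_of_nonneg_left hsum hQ,
    mul_add Q (∑ i ∈ I \ S, n i / c i) (∑ i ∈ S, n i / c i)]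

theorem exists_subset_card_le_sum_le_of_sum_div_le (I : Finset ι) {n c : ι → 𝕜} (r : ℕ)
    (hc : ∀ i ∈ I, 0 < c i) (hn₀ : ∀ i ∈ I, 0 ≤ n i) (hnc : ∀ i ∈ I, n i ≤ c i)
    (hsum : ∑ i ∈ I, n i / c i ≤ r) :
    ∃ S ⊆ I, #S ≤ r ∧ ∑ i ∈ I, n i ≤ ∑ i ∈ S, c i := by
  by_cases hIr : #I ≤ r
  · exact ⟨I, Subset.rfl, hIr, sum_le_sum hnc⟩
  rw [not_le] at hIr
  obtain ⟨S, hS, hmax⟩ := exists_max_image (I.powersetCard r) (fun S => ∑ i ∈ S, c i)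
    (powersetCard_nonempty.2 hIr.le)
  obtain ⟨hSI, hSr⟩ := mem_powersetCard.1 hS
  have hrest : (I \ S).Nonempty := by
    rw [← card_pos, card_sdiff_of_subset hSI]
    omega
  -- `S` is a heaviest `r`-subset, so `c` on `I \ S` lies below `c` on `S`; the largest value
  -- of `c` outside `S` serves as the threshold.
  obtain ⟨j, hj, hjmax⟩ := exists_max_image (I \ S) c hrest
  refine ⟨S, hSI, hSr.le, sum_le_sum_of_sum_div_le_card hSI hc hn₀ hnc
    (hc j (mem_sdiff.1 hj).1).le hjmax
    (fun u hu => le_of_mem_sdiff_of_forall_sum_le hS hmax hj hu) (hSr ▸ hsum)⟩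

end Knapsack

section SubsetSums

variable {ι β : Type*} [Fintype ι] [DecidableEq β] [AddCommMonoid β] [PartialOrder β]
  [IsOrderedCancelAddMonoid β] {w : ι → β}

lemma isAntichain_filter_sum_eq (hw : ∀ i, 0 < w i) (t : β) :
    IsAntichain (· ⊆ ·)
      ((univ.filter fun Z : Finset ι => ∑ i ∈ Z, w i = t) : Set (Finset ι)) := by
  intro Z hZ Z' hZ' hne hsub
  simp only [coe_filter, mem_univ, true_and, Set.mem_ofPred_eq] at hZ hZ'
  obtain ⟨u, huZ', huZ⟩ := exists_of_ssubset (hsub.lt_of_ne hne)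
  exact (sum_lt_sum_of_subset hsub huZ' huZ (hw u) fun j _ _ => (hw j).le).ne (hZ.trans hZ'.symm)

lemma sum_card_slice_filter_sum_mem_div_choose_le (hw : ∀ i, 0 < w i) (T : Finset β) :
    ∑ r ∈ range (Fintype.card ι + 1),
      (#((univ.filter fun Z : Finset ι => ∑ i ∈ Z, w i ∈ T) # r) : ℚ) /
        (Fintype.card ι).choose r ≤ #T := by
  set A : β → Finset (Finset ι) := fun t => univ.filter fun Z => ∑ i ∈ Z, w i = t
  have hslice : ∀ r, #((univ.filter fun Z : Finset ι => ∑ i ∈ Z, w i ∈ T) # r) ≤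
      ∑ t ∈ T, #((A t).slice r) := by
    refine fun r => (card_le_card fun Z hZ => ?_).trans card_biUnion_le
    obtain ⟨hZT, hZr⟩ := mem_slice.1 hZ
    exact mem_biUnion.2 ⟨_, (mem_filter.1 hZT).2, mem_slice.2 ⟨by simp [A], hZr⟩⟩
  calc _ ≤ ∑ r ∈ range (Fintype.card ι + 1), ∑ t ∈ T,
          (#((A t).slice r) : ℚ) / (Fintype.card ι).choose r := by
        refine sum_le_sum fun r _ => ?_
        rw [← sum_div]
        gcongr
        exact_mod_cast hslice r
    _ = ∑ t ∈ T, ∑ r ∈ range (Fintype.card ι + 1),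
          (#((A t).slice r) : ℚ) / (Fintype.card ι).choose r := sum_comm
    _ ≤ ∑ t ∈ T, (1 : ℚ) :=
        sum_le_sum fun t _ => sum_card_slice_div_choose_le_one (isAntichain_filter_sum_eq hw t)
    _ = #T := by simp

theorem exists_card_filter_sum_mem_le_sum_choose (hw : ∀ i, 0 < w i) (T : Finset β) :
    ∃ S ⊆ range (Fintype.card ι + 1), #S ≤ #T ∧
      #(univ.filter fun Z : Finset ι => ∑ i ∈ Z, w i ∈ T) ≤
        ∑ j ∈ S, (Fintype.card ι).choose j := by
  set F := univ.filter fun Z : Finset ι => ∑ i ∈ Z, w i ∈ T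
  obtain ⟨S, hS, hST, hle⟩ := exists_subset_card_le_sum_le_of_sum_div_le
    (range (Fintype.card ι + 1)) (n := fun r => (#(F # r) : ℚ))
    (c := fun r => ((Fintype.card ι).choose r : ℚ)) #T
    (fun r hr => by exact_mod_cast Nat.choose_pos (Nat.lt_succ_iff.1 (mem_range.1 hr)))
    (fun _ _ => by positivity) (fun r _ => by exact_mod_cast sized_slice.card_le)
    (sum_card_slice_filter_sum_mem_div_choose_le hw T)
  refine ⟨S, hS, hST, ?_⟩
  rw [← sum_card_slice F, ← Nat.range_succ_eq_Iic]
  exact_mod_cast hle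

end SubsetSums

lemma sum_mul_signVal {ι : Type*} [Fintype ι] (g : ι → ℤ) (x : ι → Bool) :
    ∑ i, g i * signVal (x i) = ∑ i ∈ univ.filter (fun i => x i), 2 * g i - ∑ i, g i := by
  rw [sum_filter, ← sum_sub_distrib]
  refine sum_congr rfl fun i _ => ?_
  cases x i <;> simp only [signVal, Bool.false_eq_true, ↓reduceIte] <;> ring

lemma eq_and_eq_of_mul_signVal_add_mul_signVal_eq {a b : ℤ} (ha : 0 < a) (hb : 0 < b)
    (hab : a ≠ b) {p q p' q' : Bool}
    (h : a * signVal p + b * signVal q = a * signVal p' + b * signVal q') : p = p' ∧ q = q' := by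
  cases p <;> cases q <;> cases p' <;> cases q' <;> simp [signVal] at h ⊢ <;> omega

theorem exists_card_perpB_le_card_filter_sum_mem {k : ℕ} {lam : Fin k → ℤ}
    (hpos : ∀ i, 0 < lam i) {a b : Fin k} (hab : lam a ≠ lam b) :
    ∃ T : Finset ℤ, #T ≤ 4 ∧ #(perpB lam) ≤
      #(univ.filter fun Z : Finset ({a, b}ᶜ : Finset (Fin k)) => ∑ i ∈ Z, 2 * lam i ∈ T) := by
  set O : Finset (Fin k) := {a, b}ᶜ
  set L := ∑ i : O, lam i
  set Z : (Fin k → Bool) → Finset O := fun x => univ.filter fun i => x i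
  have hsplit : ∀ x, ∑ i, lam i * signVal (x i) =
      lam a * signVal (x a) + lam b * signVal (x b) + (∑ i ∈ Z x, 2 * lam i - L) := by
    intro x
    rw [← sum_add_sum_compl {a, b}, sum_pair (ne_of_apply_ne lam hab), ← sum_mul_signVal,
      sum_coe_sort O fun i => lam i * signVal (x i)]
  have hperp : ∀ x ∈ perpB lam,
      lam a * signVal (x a) + lam b * signVal (x b) + (∑ i ∈ Z x, 2 * lam i - L) = 0 :=
    fun x hx => (hsplit x).symm.trans (mem_filter.1 hx).2
  refine ⟨univ.image fun pq : Bool × Bool => L - lam a * signVal pq.1 - lam b * signVal pq.2,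
    card_image_le.trans (by simp), card_le_card_of_injOn Z (fun x hx => ?_) fun x hx y hy hxy => ?_⟩
  · refine mem_filter.2 ⟨mem_univ _, mem_image.2 ⟨(x a, x b), mem_univ _, ?_⟩⟩
    linarith [hperp x hx]
  · have hO : ∀ i ∈ O, x i = y i := fun i hi => by
      have := Finset.ext_iff.1 hxy ⟨i, hi⟩
      simp only [Z, mem_filter, mem_univ, true_and] at this
      exact Bool.eq_iff_iff.2 this
    have hZsum : ∑ i ∈ Z x, 2 * lam i = ∑ i ∈ Z y, 2 * lam i := by rw [hxy]
    have hsigns : lam a * signVal (x a) + lam b * signVal (x b) =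
        lam a * signVal (y a) + lam b * signVal (y b) := by
      linarith [hperp x hx, hperp y hy]
    have hab' := eq_and_eq_of_mul_signVal_add_mul_signVal_eq (hpos a) (hpos b) hab hsigns
    funext i
    by_cases hi : i ∈ O
    · exact hO i hi
    obtain rfl | rfl : i = a ∨ i = b := by
      simpa only [O, mem_compl, not_not, mem_insert, mem_singleton] using hi
    exacts [hab'.1, hab'.2]

theorem stmt6_general {k : ℕ} (lam : Fin k → ℤ) (hpart : IsPartition lam)
    (hne : ∃ i j, lam i ≠ lam j) :
    (perpB lam).card ≤ sumTop4 (k - 2) := by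
  obtain ⟨a, b, hab⟩ := hne
  have hpos : ∀ i, 0 < lam i := hpart.2
  obtain ⟨T, hT, hperp⟩ := exists_card_perpB_le_card_filter_sum_mem hpos hab
  obtain ⟨S, hS, hST, hsubsets⟩ := exists_card_filter_sum_mem_le_sum_choose
    (w := fun i : ({a, b}ᶜ : Finset (Fin k)) => 2 * lam i) (fun i => by linarith [hpos i]) T
  have hcard : Fintype.card ({a, b}ᶜ : Finset (Fin k)) = k - 2 := by
    rw [Fintype.card_coe, card_compl, card_pair (ne_of_apply_ne lam hab), Fintype.card_fin]
  rw [hcard] at hS hsubsets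
  have hS4 : ∑ j ∈ S, (k - 2).choose j ≤ sumTop4 (k - 2) :=
    le_sup (f := fun S => ∑ j ∈ S, (k - 2).choose j)
      (mem_filter.2 ⟨mem_powerset.2 hS, hST.trans hT⟩)
  exact hperp.trans (hsubsets.trans hS4)

/-- if `λ` has `k ≥ 3` parts, not all equal, then `|λ^{⊥B}|` is at most
the sum of the four largest binomial coefficients of `k - 2`. -/
theorem stmt6 {k : ℕ} (hk : 3 ≤ k) (lam : Fin k → ℤ) (hpart : IsPartition lam)
    (hne : ∃ i j, lam i ≠ lam j) :
    (perpB lam).card ≤ sumTop4 (k - 2) :=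
  stmt6_general lam hpart hne

end P2834
end
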